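/- arXiv:0712.3092 — 11 statements merged into one kernel-verified Lean document; each statement's English description precedes it below -/
import Mathlib

section
/- Let A be a ring, a ∈ A, and let C be the centralizer of a in A. If f(X) is a polynomial with coefficients in C and f(X) = g(X)·(X - a) in A[X] for some g(X) ∈ A[X], then all coefficients of g(X) lie in C. -/
/-! Comparing coefficients in `f = g * (X - C a)` gives `g_i = f_{i+1} + g_{i+1} * a`, so commuting
with `a` propagates downward from the vanishing coefficients of `g` above its degree. -/

open Polynomial

theorem commute_of_eq_add_mul_succ {R : Type*} [Semiring R] {a : R} {x y : ℕ → R} (N : ℕ)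
    (hx : ∀ i, N < i → x i = 0) (hy : ∀ i, Commute (y i) a)
    (hxy : ∀ i, x i = y i + x (i + 1) * a) (i : ℕ) : Commute (x i) a := by
  suffices h : ∀ n i, N < i + n → Commute (x i) a from h (N + 1) i (by omega)
  intro n
  induction n with
  | zero => exact fun i hi => hx i hi ▸ Commute.zero_left a
  | succ n ih =>
    intro i hi
    rw [hxy i]
    exact (hy i).add_left ((ih (i + 1) (by omega)).mul_left (Commute.refl a))

theorem quotient_coeffs_in_centralizer {A : Type*} [Ring A] (a : A)
    (f g : A[X])
    (hf : ∀ i, f.coeff i * a = a * f.coeff i)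
    (hfg : f = g * (X - C a)) :
    ∀ i, g.coeff i * a = a * g.coeff i := by
  have hg : ∀ i, g.coeff i = f.coeff (i + 1) + g.coeff (i + 1) * a := by
    intro i
    rw [hfg, coeff_mul_X_sub_C]
    abel
  exact commute_of_eq_add_mul_succ g.natDegree (fun i => g.coeff_eq_zero_of_natDegree_lt)
    (fun i => hf (i + 1)) hg
end

section
/- Let A be a unital ring and a₁, …, aₙ ∈ A. Suppose f(X) ∈ A[X] has all its coefficients commuting with each aₖ, and f(X) = c·(X - a₁)·(X - a₂)⋯(X - aₙ) in A[X]. Then f(X) = c·(X - aₙ)·(X - a₁)⋯(X - aₙ₋₁), i.e., the linear factors may be cyclically permuted. -/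
/-!
Since the coefficients of `f` commute with `a`, `f` commutes with `X - C a`. Writing
`f = c P (X - a)`, this gives `c P (X - a)² = (X - a) c P (X - a)`, and cancelling the monic
factor `X - a` on the right yields `c P (X - a) = (X - a) c P`. Finally `c`, the leading
coefficient of `f`, commutes with `a`, so `(X - a) c P = c (X - a) P`.
-/

open Polynomial

theorem Commute.of_mul_left_of_isRightRegular {M : Type*} [Monoid M] {x q : M}
    (hq : IsRightRegular q) (h : Commute (x * q) q) : Commute x q :=
  hq (h.eq.trans (mul_assoc q x q).symm)

namespace Polynomial

variable {R : Type*} [Ring R]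

theorem commute_X_sub_C_of_forall_coeff {p : R[X]} {a : R} (h : ∀ i, Commute (p.coeff i) a) :
    Commute p (X - C a) := by
  refine (commute_X p).symm.sub_right ?_
  ext i
  simpa only [coeff_mul_C, coeff_C_mul] using (h i).eq

theorem coeff_prod_map_X_sub_C_length (l : List R) :
    (l.map fun x => X - C x).prod.coeff l.length = 1 := by
  have h := coeff_list_prod_of_natDegree_le (l.map fun x => X - C x) 1
    (by simpa using fun x _ => natDegree_X_sub_C_le x)
  rw [List.length_map, mul_one] at h
  exact h.trans (List.prod_eq_one (by simp))

end Polynomial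

/-- Cyclic permutation of linear factors: if `f = c·(X-a₁)⋯(X-aₙ)` with the `aₖ`
listed as `l ++ [a]`, and all coefficients of `f` commute with every `aₖ`, then
the last factor may be moved to the front. -/
theorem cyclic_permutation_of_factors {A : Type*} [Ring A] (c : A) (l : List A) (a : A)
    (f : A[X])
    (hcomm : ∀ i, ∀ x ∈ l ++ [a], f.coeff i * x = x * f.coeff i)
    (hsplit : f = C c * ((l ++ [a]).map (fun x => X - C x)).prod) :
    f = C c * (([a] ++ l).map (fun x => X - C x)).prod := by
  set P := (l.map fun x => X - C x).prod
  have hcomm_a : ∀ i, Commute (f.coeff i) a := fun i => hcomm i a (by simp)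
  have hf : f = C c * P * (X - C a) := by simpa [mul_assoc] using hsplit
  have hca : Commute c a := by
    have hc : f.coeff (l ++ [a]).length = c := by
      rw [hsplit, coeff_C_mul, coeff_prod_map_X_sub_C_length, mul_one]
    exact hc ▸ hcomm_a _
  have hcP : Commute (C c * P) (X - C a) :=
    .of_mul_left_of_isRightRegular (monic_X_sub_C a).isRegular.right
      (hf ▸ commute_X_sub_C_of_forall_coeff hcomm_a)
  have hCc : Commute (C c) (X - C a) := (commute_X (C c)).symm.sub_right (hca.map C)
  calc f = C c * P * (X - C a) := hf
    _ = C c * (X - C a) * P := by rw [hcP.eq, ← mul_assoc, hCc.eq]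
    _ = C c * (([a] ++ l).map fun x => X - C x).prod := by simp [mul_assoc, P]
end

section
/- In the ring A of upper triangular 2×2 matrices over a nonzero commutative ring K, with a₁ = [[0,0],[0,1]], a₂ = [[0,-1],[0,0]], a₃ = [[1,1],[0,0]], the polynomial X²(X-1) ∈ A[X] splits as (X - a₁)(X - a₂)(X - a₃). -/
/-!
For `i < j` the pseudoroots satisfy `aᵢ * aⱼ = 0`, so all lower-order terms of
`(X - a₁)(X - a₂)(X - a₃)` vanish except `-(a₁ + a₂ + a₃) X²`, and `a₁ + a₂ + a₃ = 1`.
-/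

open Polynomial Matrix

namespace Polynomial

variable {R : Type*} [Ring R]

theorem C_mul_X_mul_C (a b : R) : C a * X * C b = C (a * b) * X := by
  rw [mul_assoc, X_mul_C, ← mul_assoc, ← C_mul]

theorem X_sub_C_mul_X_sub_C_of_mul_eq_zero {a b : R} (hab : a * b = 0) :
    (X - C a) * (X - C b) = X ^ 2 - C (a + b) * X := by
  rw [sub_mul, mul_sub, mul_sub, X_mul_C, ← C_mul, hab, C_0, C_add]
  noncomm_ring

theorem X_sub_C_mul_X_sub_C_mul_X_sub_C_of_mul_eq_zero {a b c : R}
    (hab : a * b = 0) (hac : a * c = 0) (hbc : b * c = 0) :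
    (X - C a) * (X - C b) * (X - C c) = X ^ 2 * (X - C (a + b + c)) := by
  have hcross : C (a + b) * X * C c = 0 := by
    rw [C_mul_X_mul_C, add_mul, hac, hbc, add_zero, C_0, zero_mul]
  rw [X_sub_C_mul_X_sub_C_of_mul_eq_zero hab, sub_mul, mul_sub, mul_sub, hcross,
    X_pow_mul (p := C c), X_pow_mul (p := X - C _)]
  simp only [C_add]
  noncomm_ring

end Polynomial

theorem Matrix.of_fin_two_zero_col_mul_zero_row {α : Type*} [NonUnitalNonAssocSemiring α]
    (p q x y : α) : !![0, p; 0, q] * !![x, y; 0, 0] = 0 := by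
  ext i j; fin_cases i <;> fin_cases j <;> simp

theorem split_example_triangular_general {K : Type*} [CommRing K] :
    (X ^ 2 * (X - 1) : (Matrix (Fin 2) (Fin 2) K)[X]) =
      (X - C !![0, 0; 0, 1]) * (X - C !![0, -1; 0, 0]) * (X - C !![1, 1; 0, 0]) := by
  have hsum :
      (!![0, 0; 0, 1] + !![0, -1; 0, 0] + !![1, 1; 0, 0] : Matrix (Fin 2) (Fin 2) K) = 1 := by
    ext i j; fin_cases i <;> fin_cases j <;> simp
  have hprod := of_fin_two_zero_col_mul_zero_row (α := K)
  rw [X_sub_C_mul_X_sub_C_mul_X_sub_C_of_mul_eq_zero (hprod _ _ _ _) (hprod _ _ _ _)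
    (hprod _ _ _ _), hsum, C_1]

/-- Splitting of `X²(X-1)` into linear factors with upper-triangular `2×2` matrix
pseudoroots. -/
theorem split_example_triangular {K : Type*} [CommRing K] [Nontrivial K] :
    (X ^ 2 * (X - 1) : (Matrix (Fin 2) (Fin 2) K)[X]) =
      (X - C !![0, 0; 0, 1]) * (X - C !![0, -1; 0, 0]) * (X - C !![1, 1; 0, 0]) :=
  split_example_triangular_general
end

section
/- In the ring of upper triangular 2×2 matrices over a nonzero commutative ring K, the matrices a₁ = [[0,0],[0,1]], a₂ = [[0,-1],[0,0]], a₃ = [[1,1],[0,0]] satisfy [a₁,a₂] = [a₂,a₃] = [a₃,a₁] = -a₂ ≠ 0; in particular no two of them commute. -/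
/-!
Since `a₁ + a₂ + a₃ = 1` is central, the three cyclic commutators of `a₁, a₂, a₃` coincide,
so only `[a₁, a₂] = -a₂` has to be computed by hand.
-/

open Matrix

section
variable {R : Type*} [Ring R] {a b c : R}

lemma Commute.mul_sub_mul_eq_of_add_add_right (h : Commute b (a + b + c)) :
    b * c - c * b = a * b - b * a := by
  obtain ⟨s, rfl⟩ : ∃ s, c = s - a - b := ⟨a + b + c, by abel⟩
  have hs : b * s = s * b := by simpa using h.eq
  simp only [mul_sub, sub_mul, hs]
  abel

lemma Commute.mul_sub_mul_eq_of_add_add_left (h : Commute a (a + b + c)) :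
    c * a - a * c = a * b - b * a := by
  obtain ⟨s, rfl⟩ : ∃ s, c = s - a - b := ⟨a + b + c, by abel⟩
  have hs : a * s = s * a := by simpa using h.eq
  simp only [mul_sub, sub_mul, hs]
  abel

end

theorem commutators_example_triangular {K : Type*} [CommRing K] [Nontrivial K] :
    let a₁ : Matrix (Fin 2) (Fin 2) K := !![0, 0; 0, 1]
    let a₂ : Matrix (Fin 2) (Fin 2) K := !![0, -1; 0, 0]
    let a₃ : Matrix (Fin 2) (Fin 2) K := !![1, 1; 0, 0]
    a₁ * a₂ - a₂ * a₁ = -a₂ ∧ a₂ * a₃ - a₃ * a₂ = -a₂ ∧ a₃ * a₁ - a₁ * a₃ = -a₂ ∧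
      (-a₂ : Matrix (Fin 2) (Fin 2) K) ≠ 0 := by
  intro a₁ a₂ a₃
  have h₁₂ : a₁ * a₂ - a₂ * a₁ = -a₂ := by
    ext i j
    fin_cases i <;> fin_cases j <;> simp [a₁, a₂]
  have hsum : a₁ + a₂ + a₃ = 1 := by
    ext i j
    fin_cases i <;> fin_cases j <;> simp [a₁, a₂, a₃]
  have hcentral (x : Matrix (Fin 2) (Fin 2) K) : Commute x (a₁ + a₂ + a₃) :=
    hsum ▸ Commute.one_right x
  have ha₂ : a₂ ≠ 0 := fun h => by simpa [a₂] using congrFun (congrFun h 0) 1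
  exact ⟨h₁₂, h₁₂ ▸ (hcentral a₂).mul_sub_mul_eq_of_add_add_right,
    h₁₂ ▸ (hcentral a₁).mul_sub_mul_eq_of_add_add_left, neg_ne_zero.mpr ha₂⟩
end

section
/- In the ring A of 3×3 matrices over a nonzero commutative ring K, with a₁ = [[0,2,0],[0,0,2],[1,0,0]], a₂ = [[0,-1,0],[0,0,2],[-2,0,0]], a₃ = [[0,-1,0],[0,0,-4],[1,0,0]], the polynomial X³ - 4 ∈ A[X] splits as (X - a₁)(X - a₂)(X - a₃). -/
/-! A monic cubic over a noncommutative ring with central variable still expands by Vieta's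
formulas, provided the roots are multiplied in the order of the factors. The three matrices have
sum `0`, pairwise products (taken in order) summing to `0`, and ordered product `4`. -/

open Polynomial Matrix

theorem sub_C_mul_sub_C_mul_sub_C {A : Type*} [Ring A] (a b c : A) :
    (X - C a) * (X - C b) * (X - C c) =
      X ^ 3 - C (a + b + c) * X ^ 2 + C (a * b + a * c + b * c) * X - C (a * b * c) := by
  have hX : ∀ (x : A) (p : A[X]), X * (C x * p) = C x * (X * p) := fun x p => by
    rw [← mul_assoc, X_mul_C, mul_assoc]
  simp only [sub_mul, mul_sub, C_add, C_mul, add_mul, mul_assoc, X_mul_C, hX]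
  noncomm_ring

theorem X_pow_three_sub_C_eq_of_vieta {A : Type*} [Ring A] {a b c r : A}
    (h₁ : a + b + c = 0) (h₂ : a * b + a * c + b * c = 0) (h₃ : a * b * c = r) :
    X ^ 3 - C r = (X - C a) * (X - C b) * (X - C c) := by
  rw [sub_C_mul_sub_C_mul_sub_C, h₁, h₂, h₃, C_0, zero_mul, zero_mul, sub_zero, add_zero]

theorem split_example_M3_general {K : Type*} [CommRing K] :
    (X ^ 3 - 4 : (Matrix (Fin 3) (Fin 3) K)[X]) =
      (X - C !![0, 2, 0; 0, 0, 2; 1, 0, 0]) *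
      (X - C !![0, -1, 0; 0, 0, 2; -2, 0, 0]) *
      (X - C !![0, -1, 0; 0, 0, -4; 1, 0, 0]) := by
  rw [← map_ofNat C 4]
  refine X_pow_three_sub_C_eq_of_vieta ?sum ?pairs ?prod
  case sum =>
    ext i j
    fin_cases i <;> fin_cases j <;> norm_num
  case pairs =>
    simp only [mul_fin_three]
    ext i j
    fin_cases i <;> fin_cases j <;> norm_num
  case prod =>
    simp only [mul_fin_three, ofNat_fin_three]
    norm_num

theorem split_example_M3 {K : Type*} [CommRing K] [Nontrivial K] :
    (X ^ 3 - 4 : (Matrix (Fin 3) (Fin 3) K)[X]) =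
      (X - C !![0, 2, 0; 0, 0, 2; 1, 0, 0]) *
      (X - C !![0, -1, 0; 0, 0, 2; -2, 0, 0]) *
      (X - C !![0, -1, 0; 0, 0, -4; 1, 0, 0]) :=
  split_example_M3_general
end

section
/- In M₃(K) over a commutative ring K in which 3 ≠ 0, the matrices a₁ = [[0,2,0],[0,0,2],[1,0,0]], a₂ = [[0,-1,0],[0,0,2],[-2,0,0]], a₃ = [[0,-1,0],[0,0,-4],[1,0,0]] satisfy [a₁,a₂] = [a₂,a₃] = [a₃,a₁] = [[0,0,6],[-6,0,0],[0,3,0]] ≠ 0. -/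
open Matrix

/-! Since `a₁ + a₂ + a₃ = 0`, the three cyclic commutators coincide, so only `[a₁, a₂]` has to be
computed; it is nonzero because its `(2, 1)` entry is `3`. -/

theorem commutator_cyclic_eq_of_add_add_eq_zero {R : Type*} [Ring R] {a b c : R}
    (h : a + b + c = 0) : b * c - c * b = a * b - b * a ∧ c * a - a * c = a * b - b * a := by
  obtain rfl : c = -(a + b) := eq_neg_of_add_eq_zero_right h
  constructor <;> noncomm_ring

theorem commutators_example_M3 {K : Type*} [CommRing K] (h3 : (3 : K) ≠ 0) :
    let a₁ : Matrix (Fin 3) (Fin 3) K := !![0, 2, 0; 0, 0, 2; 1, 0, 0]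
    let a₂ : Matrix (Fin 3) (Fin 3) K := !![0, -1, 0; 0, 0, 2; -2, 0, 0]
    let a₃ : Matrix (Fin 3) (Fin 3) K := !![0, -1, 0; 0, 0, -4; 1, 0, 0]
    let c : Matrix (Fin 3) (Fin 3) K := !![0, 0, 6; -6, 0, 0; 0, 3, 0]
    a₁ * a₂ - a₂ * a₁ = c ∧ a₂ * a₃ - a₃ * a₂ = c ∧ a₃ * a₁ - a₁ * a₃ = c ∧ c ≠ 0 := by
  intro a₁ a₂ a₃ c
  have hsum : a₁ + a₂ + a₃ = 0 := by
    ext i j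
    fin_cases i <;> fin_cases j <;> simp [a₁, a₂, a₃] <;> norm_num
  have h₁₂ : a₁ * a₂ - a₂ * a₁ = c := by
    ext i j
    fin_cases i <;> fin_cases j <;> simp [a₁, a₂, c] <;> norm_num
  have hc : c ≠ 0 := fun h => h3 (by simpa [c] using congrFun (congrFun h 2) 1)
  obtain ⟨h₂₃, h₃₁⟩ := commutator_cyclic_eq_of_add_add_eq_zero hsum
  exact ⟨h₁₂, h₂₃.trans h₁₂, h₃₁.trans h₁₂, hc⟩
end

section
/- Over a nonzero commutative ring K, with a₁ = [[0,2,0],[0,0,2],[1,0,0]], a₂ = [[0,-1,0],[0,0,2],[-2,0,0]], a₃ = [[0,-1,0],[0,0,-4],[1,0,0]] in M₃(K), one also has (X - a₃)(X - a₁)(X - a₂) = X³ - 4 and (X - a₂)(X - a₃)(X - a₁) = X³ - 4 in M₃(K)[X]. -/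
open Polynomial Matrix

/-- `X` is central, so Vieta's expansion survives over a noncommutative ring, with every
product of roots taken in the order of the factors. -/
theorem X_sub_C_mul_X_sub_C_mul_X_sub_C {R : Type*} [Ring R] (a b c : R) :
    (X - C a) * (X - C b) * (X - C c) =
      X ^ 3 - C (a + b + c) * X ^ 2 + C (a * b + a * c + b * c) * X - C (a * b * c) := by
  simp only [map_add, map_mul, sub_mul, mul_sub, add_mul, mul_assoc, ← pow_two, ← pow_succ]
  simp only [← mul_assoc, X_mul_C]
  simp only [mul_assoc, ← pow_two, X_pow_mul, X_mul_C]
  abel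

theorem X_sub_C_mul_X_sub_C_mul_X_sub_C_eq_X_pow_three_sub_C {R : Type*} [Ring R]
    {a b c r : R} (h₁ : a + b + c = 0) (h₂ : a * b + a * c + b * c = 0) (h₃ : a * b * c = r) :
    (X - C a) * (X - C b) * (X - C c) = X ^ 3 - C r := by
  rw [X_sub_C_mul_X_sub_C_mul_X_sub_C, h₁, h₂, h₃, map_zero, zero_mul, zero_mul, sub_zero,
    add_zero]

namespace CyclicSplittingM3

variable (K : Type*) [CommRing K]

def a₁ : Matrix (Fin 3) (Fin 3) K := !![0, 2, 0; 0, 0, 2; 1, 0, 0]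

def a₂ : Matrix (Fin 3) (Fin 3) K := !![0, -1, 0; 0, 0, 2; -2, 0, 0]

def a₃ : Matrix (Fin 3) (Fin 3) K := !![0, -1, 0; 0, 0, -4; 1, 0, 0]

theorem splitting_a₃_a₁_a₂ :
    a₃ K + a₁ K + a₂ K = 0 ∧ a₃ K * a₁ K + a₃ K * a₂ K + a₁ K * a₂ K = 0 ∧
      a₃ K * a₁ K * a₂ K = 4 := by
  refine ⟨?_, ?_, ?_⟩ <;>
  · ext i j
    fin_cases i <;> fin_cases j <;>
      simp [a₁, a₂, a₃, mul_apply, Fin.sum_univ_three, ofNat_fin_three] <;> norm_num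

theorem splitting_a₂_a₃_a₁ :
    a₂ K + a₃ K + a₁ K = 0 ∧ a₂ K * a₃ K + a₂ K * a₁ K + a₃ K * a₁ K = 0 ∧
      a₂ K * a₃ K * a₁ K = 4 := by
  refine ⟨?_, ?_, ?_⟩ <;>
  · ext i j
    fin_cases i <;> fin_cases j <;>
      simp [a₁, a₂, a₃, mul_apply, Fin.sum_univ_three, ofNat_fin_three] <;> norm_num

end CyclicSplittingM3

open CyclicSplittingM3 in
theorem cyclic_splittings_M3_general {K : Type*} [CommRing K] :
    let a₁ : (Matrix (Fin 3) (Fin 3) K)[X] := X - C !![0, 2, 0; 0, 0, 2; 1, 0, 0]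
    let a₂ : (Matrix (Fin 3) (Fin 3) K)[X] := X - C !![0, -1, 0; 0, 0, 2; -2, 0, 0]
    let a₃ : (Matrix (Fin 3) (Fin 3) K)[X] := X - C !![0, -1, 0; 0, 0, -4; 1, 0, 0]
    a₃ * a₁ * a₂ = X ^ 3 - 4 ∧ a₂ * a₃ * a₁ = X ^ 3 - 4 := by
  obtain ⟨hsum₁, hpair₁, hprod₁⟩ := splitting_a₃_a₁_a₂ K
  obtain ⟨hsum₂, hpair₂, hprod₂⟩ := splitting_a₂_a₃_a₁ K
  show (X - C (a₃ K)) * (X - C (a₁ K)) * (X - C (a₂ K)) = X ^ 3 - 4 ∧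
    (X - C (a₂ K)) * (X - C (a₃ K)) * (X - C (a₁ K)) = X ^ 3 - 4
  rw [← map_ofNat C 4]
  exact ⟨X_sub_C_mul_X_sub_C_mul_X_sub_C_eq_X_pow_three_sub_C hsum₁ hpair₁ hprod₁,
    X_sub_C_mul_X_sub_C_mul_X_sub_C_eq_X_pow_three_sub_C hsum₂ hpair₂ hprod₂⟩

theorem cyclic_splittings_M3 {K : Type*} [CommRing K] [Nontrivial K] :
    let a₁ : (Matrix (Fin 3) (Fin 3) K)[X] := X - C !![0, 2, 0; 0, 0, 2; 1, 0, 0]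
    let a₂ : (Matrix (Fin 3) (Fin 3) K)[X] := X - C !![0, -1, 0; 0, 0, 2; -2, 0, 0]
    let a₃ : (Matrix (Fin 3) (Fin 3) K)[X] := X - C !![0, -1, 0; 0, 0, -4; 1, 0, 0]
    a₃ * a₁ * a₂ = X ^ 3 - 4 ∧ a₂ * a₃ * a₁ = X ^ 3 - 4 :=
  cyclic_splittings_M3_general
end

section
/- Let K be a commutative ring in which 2 and 3 are not zero divisors. Then a 3×3 matrix over K commutes with all three of a₁ = [[0,2,0],[0,0,2],[1,0,0]], a₂ = [[0,-1,0],[0,0,2],[-2,0,0]], a₃ = [[0,-1,0],[0,0,-4],[1,0,0]] if and only if it is a scalar matrix α·1 for some α ∈ K. -/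
/-!
Since each aᵢ has the cyclic pattern of nonzero entries at (0,1), (1,2), (2,0), the product
a₁ a₁ a₂ is diagonal, namely diag(-8, -2, 4). Its diagonal entries differ pairwise by ±6 or ±12,
which are regular because 2 and 3 are, so a matrix commuting with it is diagonal. A diagonal
matrix commuting with a₁ has equal entries, since the entries 2 and 1 of a₁ link the positions
0, 1 and 2, 0.
-/

open Matrix

theorem IsLeftRegular.neg {R : Type*} [Ring R] {a : R} (ha : IsLeftRegular a) :
    IsLeftRegular (-a) :=
  fun x y hxy => ha (neg_injective (by simpa only [neg_mul] using hxy))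

theorem isLeftRegular_neg_iff {R : Type*} [Ring R] {a : R} :
    IsLeftRegular (-a) ↔ IsLeftRegular a :=
  ⟨fun h => neg_neg a ▸ h.neg, IsLeftRegular.neg⟩

namespace Matrix

variable {n R : Type*} [Fintype n] [DecidableEq n] [CommRing R]

theorem sub_mul_apply_eq_zero_of_commute_diagonal {d : n → R} {M : Matrix n n R}
    (h : Commute (diagonal d) M) (i j : n) : (d i - d j) * M i j = 0 := by
  have hij := congrFun (congrFun h.eq i) j
  rw [diagonal_mul, mul_diagonal] at hij
  linear_combination hij

theorem eq_diagonal_diag_of_commute_diagonal {d : n → R}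
    (hd : Pairwise fun i j => IsLeftRegular (d i - d j)) {M : Matrix n n R}
    (h : Commute (diagonal d) M) : M = diagonal M.diag := by
  ext i j
  rcases eq_or_ne i j with rfl | hij
  · simp
  · rw [diagonal_apply_ne _ hij]
    exact (hd hij).mul_left_eq_zero_iff.mp (sub_mul_apply_eq_zero_of_commute_diagonal h i j)

theorem apply_eq_apply_of_commute_diagonal {c : n → R} {M : Matrix n n R}
    (h : Commute (diagonal c) M) {i j : n} (hM : IsLeftRegular (M i j)) : c i = c j := by
  rw [← sub_eq_zero, ← hM.mul_left_eq_zero_iff, mul_comm]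
  exact sub_mul_apply_eq_zero_of_commute_diagonal h i j

end Matrix

theorem pairwise_isLeftRegular_sub {K : Type*} [CommRing K] (h2 : IsLeftRegular (2 : K))
    (h3 : IsLeftRegular (3 : K)) :
    Pairwise fun i j => IsLeftRegular (![(-8 : K), -2, 4] i - ![(-8 : K), -2, 4] j) := by
  have h6 : IsLeftRegular (6 : K) := by
    simpa only [show (6 : K) = 2 * 3 by norm_num] using h2.mul h3
  have h12 : IsLeftRegular (12 : K) := by
    simpa only [show (12 : K) = 2 * 6 by norm_num] using h2.mul h6
  intro i j hij
  fin_cases i <;> fin_cases j <;> first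
    | exact absurd rfl hij
    | (norm_num [isLeftRegular_neg_iff, -isLeftRegular_iff_isRegular]; assumption)

theorem joint_centralizer_M3 {K : Type*} [CommRing K]
    (h2 : ∀ x : K, 2 * x = 0 → x = 0) (h3 : ∀ x : K, 3 * x = 0 → x = 0) :
    let a₁ : Matrix (Fin 3) (Fin 3) K := !![0, 2, 0; 0, 0, 2; 1, 0, 0]
    let a₂ : Matrix (Fin 3) (Fin 3) K := !![0, -1, 0; 0, 0, 2; -2, 0, 0]
    let a₃ : Matrix (Fin 3) (Fin 3) K := !![0, -1, 0; 0, 0, -4; 1, 0, 0]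
    ∀ x : Matrix (Fin 3) (Fin 3) K,
      (x * a₁ = a₁ * x ∧ x * a₂ = a₂ * x ∧ x * a₃ = a₃ * x) ↔
        ∃ α : K, x = α • (1 : Matrix (Fin 3) (Fin 3) K) := by
  intro a₁ a₂ a₃ x
  constructor
  · rintro ⟨h₁, h₂, -⟩
    have hreg2 : IsLeftRegular (2 : K) := isLeftRegular_iff_right_eq_zero_of_mul.mpr h2
    have hreg3 : IsLeftRegular (3 : K) := isLeftRegular_iff_right_eq_zero_of_mul.mpr h3
    have hprod : a₁ * a₁ * a₂ = diagonal ![-8, -2, 4] := by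
      rw [diagonal_fin_three]
      norm_num [a₁, a₂, mul_fin_three, cons_val_two]
    have hcomm : Commute (diagonal ![-8, -2, 4]) x :=
      hprod ▸ ((Commute.mul_right h₁ h₁).mul_right h₂).symm
    have hx := eq_diagonal_diag_of_commute_diagonal (pairwise_isLeftRegular_sub hreg2 hreg3) hcomm
    have hc : Commute (diagonal x.diag) a₁ := by rw [← hx]; exact h₁
    have h01 : x 0 0 = x 1 1 := apply_eq_apply_of_commute_diagonal hc (i := 0) (j := 1) hreg2
    have h20 : x 2 2 = x 0 0 :=
      apply_eq_apply_of_commute_diagonal hc (i := 2) (j := 0) isRegular_one.left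
    refine ⟨x 0 0, hx.trans ?_⟩
    rw [smul_one_eq_diagonal, diagonal_fin_three, diagonal_fin_three]
    simp [h01, h20]
  · rintro ⟨α, rfl⟩
    have hscalar (a : Matrix (Fin 3) (Fin 3) K) : Commute (α • 1) a :=
      (Commute.one_left a).smul_left α
    exact ⟨(hscalar a₁).eq, (hscalar a₂).eq, (hscalar a₃).eq⟩
end

section
/- Let K be a commutative ring in which 2, 3, 5 and 7 are invertible. Then the matrices a₁ = [[0,2,0],[0,0,2],[1,0,0]], a₂ = [[0,-1,0],[0,0,2],[-2,0,0]], a₃ = [[0,-1,0],[0,0,-4],[1,0,0]] generate M₃(K) as a K-algebra. -/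
/-!
Already `a₁` and `a₂` generate. Writing `σ` for the cyclic shift `0 ↦ 1 ↦ 2 ↦ 0`, the matrix
`a₁ = 2 E₀₁ + 2 E₁₂ + E₂₀` is monomial along `σ` with unit entries, so multiplying a matrix unit
`E i j` by `a₁` on the right moves `j` along `σ`, and on the left moves `i` along `σ⁻¹`, up to
units. As `σ` is a single cycle, one matrix unit gives all of them, and one is at hand:
`18 E₀₂ = 3 a₁² + 2 a₁ a₂ + a₂ a₁`.
-/

open Matrix Equiv Perm

theorem Equiv.Perm.SameCycle.mem_of_mapsTo {α : Type*} [Finite α] {f : Perm α} {s : Set α}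
    (hs : Set.MapsTo f s s) {x y : α} (hxy : f.SameCycle x y) (hx : x ∈ s) : y ∈ s := by
  obtain ⟨k, rfl⟩ := hxy.exists_nat_pow_eq
  exact hs.perm_pow k hx

theorem Subalgebra.smul_mem_iff_of_isUnit {R S : Type*} [CommSemiring R] [Semiring S] [Algebra R S]
    (A : Subalgebra R S) {r : R} (hr : IsUnit r) {x : S} : r • x ∈ A ↔ x ∈ A :=
  A.toSubmodule.smul_mem_iff_of_isUnit hr

section MonomialMatrix

variable {n K : Type*} [Fintype n] [DecidableEq n] [CommRing K]

theorem Subalgebra.eq_top_of_forall_single_mem {A : Subalgebra K (Matrix n n K)}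
    (h : ∀ i j, single i j (1 : K) ∈ A) : A = ⊤ := by
  refine eq_top_iff.2 fun M _ => ?_
  rw [matrix_eq_sum_single M]
  refine A.sum_mem fun i _ => A.sum_mem fun j _ => ?_
  simpa [smul_single] using A.smul_mem (h i j) (M i j)

variable {M : Matrix n n K} {σ : Perm n}

theorem Matrix.single_one_mul_of_apply_eq_zero (hM : ∀ i j, j ≠ σ i → M i j = 0) (i j : n) :
    single i j (1 : K) * M = M j (σ j) • single i (σ j) 1 := by
  ext a b
  by_cases ha : a = i
  · subst ha
    by_cases hb : b = σ j
    · subst hb; simp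
    · simp [hM j b hb, single_apply_of_col_ne _ _ (Ne.symm hb)]
  · simp [ha, single_apply_of_row_ne (Ne.symm ha)]

theorem Matrix.mul_single_one_of_apply_eq_zero (hM : ∀ i j, j ≠ σ i → M i j = 0) (i j : n) :
    M * single (σ i) j (1 : K) = M i (σ i) • single i j 1 := by
  ext a b
  by_cases hb : b = j
  · subst hb
    by_cases ha : a = i
    · subst ha; simp
    · have : σ i ≠ σ a := fun h => ha (σ.injective h).symm
      simp [hM a (σ i) this, single_apply_of_row_ne (Ne.symm ha)]
  · simp [hb, single_apply_of_col_ne _ _ (Ne.symm hb)]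

theorem Subalgebra.eq_top_of_single_mem_of_monomial_mem {A : Subalgebra K (Matrix n n K)}
    (hMA : M ∈ A) (hM : ∀ i j, j ≠ σ i → M i j = 0) (hunit : ∀ i, IsUnit (M i (σ i)))
    (hσ : ∀ x y, σ.SameCycle x y) {p q : n} (hpq : single p q (1 : K) ∈ A) : A = ⊤ := by
  have hcol : ∀ i, Set.MapsTo σ {j | single i j (1 : K) ∈ A} {j | single i j (1 : K) ∈ A} :=
    fun i j hj => (A.smul_mem_iff_of_isUnit (hunit j)).1 <| by
      rw [← single_one_mul_of_apply_eq_zero hM]; exact A.mul_mem hj hMA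
  have hrow : ∀ j, Set.MapsTo σ.symm {i | single i j (1 : K) ∈ A} {i | single i j (1 : K) ∈ A} :=
    fun j i hi => (A.smul_mem_iff_of_isUnit (hunit _)).1 <| by
      rw [← mul_single_one_of_apply_eq_zero hM, Equiv.apply_symm_apply]; exact A.mul_mem hMA hi
  refine Subalgebra.eq_top_of_forall_single_mem fun i j => ?_
  have hpj : single p j (1 : K) ∈ A := (hσ q j).mem_of_mapsTo (hcol p) hpq
  exact (sameCycle_inv.2 (hσ p i)).mem_of_mapsTo (hrow j) hpj

end MonomialMatrix

theorem eighteen_smul_single_zero_two {K : Type*} [CommRing K] :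
    let a₁ : Matrix (Fin 3) (Fin 3) K := !![0, 2, 0; 0, 0, 2; 1, 0, 0]
    let a₂ : Matrix (Fin 3) (Fin 3) K := !![0, -1, 0; 0, 0, 2; -2, 0, 0]
    (18 : K) • single 0 2 1 = (3 : K) • (a₁ * a₁) + (2 : K) • (a₁ * a₂) + a₂ * a₁ := by
  intro a₁ a₂
  ext i j
  fin_cases i <;> fin_cases j <;> simp [a₁, a₂] <;> norm_num

theorem sameCycle_finRotate {n : ℕ} (x y : Fin (n + 2)) : (finRotate (n + 2)).SameCycle x y :=
  isCycle_finRotate.sameCycle (mem_support.1 (support_finRotate ▸ Finset.mem_univ x))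
    (mem_support.1 (support_finRotate ▸ Finset.mem_univ y))

theorem roots_generate_M3_general {K : Type*} [CommRing K]
    (h2 : IsUnit (2 : K)) (h3 : IsUnit (3 : K)) :
    Algebra.adjoin K {(!![0, 2, 0; 0, 0, 2; 1, 0, 0] : Matrix (Fin 3) (Fin 3) K),
        !![0, -1, 0; 0, 0, 2; -2, 0, 0], !![0, -1, 0; 0, 0, -4; 1, 0, 0]} = ⊤ := by
  set a₁ : Matrix (Fin 3) (Fin 3) K := !![0, 2, 0; 0, 0, 2; 1, 0, 0]
  set a₂ : Matrix (Fin 3) (Fin 3) K := !![0, -1, 0; 0, 0, 2; -2, 0, 0]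
  set A := Algebra.adjoin K {a₁, a₂, !![0, -1, 0; 0, 0, -4; 1, 0, 0]}
  have ha₁ : a₁ ∈ A := Algebra.subset_adjoin (by simp)
  have ha₂ : a₂ ∈ A := Algebra.subset_adjoin (by simp)
  have hE : single 0 2 (1 : K) ∈ A := by
    have h18 : IsUnit (18 : K) := by
      convert h2.mul (h3.mul h3) using 1; norm_num
    refine (A.smul_mem_iff_of_isUnit h18).1 ?_
    rw [eighteen_smul_single_zero_two]
    exact add_mem (add_mem (A.smul_mem (mul_mem ha₁ ha₁) _) (A.smul_mem (mul_mem ha₁ ha₂) _))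
      (mul_mem ha₂ ha₁)
  refine Subalgebra.eq_top_of_single_mem_of_monomial_mem ha₁ (σ := finRotate 3) ?_ ?_
    (sameCycle_finRotate (n := 1)) hE
  · intro i j hij
    fin_cases i <;> fin_cases j <;> simp_all [a₁]
  · intro i
    fin_cases i <;> simp [a₁, h2]

theorem roots_generate_M3 {K : Type*} [CommRing K]
    (h2 : IsUnit (2 : K)) (h3 : IsUnit (3 : K)) (h5 : IsUnit (5 : K))
    (h7 : IsUnit (7 : K)) :
    Algebra.adjoin K {(!![0, 2, 0; 0, 0, 2; 1, 0, 0] : Matrix (Fin 3) (Fin 3) K),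
        !![0, -1, 0; 0, 0, 2; -2, 0, 0], !![0, -1, 0; 0, 0, -4; 1, 0, 0]} = ⊤ :=
  roots_generate_M3_general h2 h3
end

section
/- Let A be a unital ring, a₁, …, aₙ ∈ A, and let C denote the subring of elements of A commuting with all aₖ. If f(X) ∈ C[X] splits in A[X] as f(X) = c·(X - a₁)⋯(X - aₙ), then the substitution maps X ↦ aₖ define a ring homomorphism C[X]/(f(X)) → A^n, x ↦ (eval_{a₁}(x), …, eval_{aₙ}(x)). -/
open Polynomial

/-!
Fix `k` and write `f = g * (X - aₖ) * P`, where `P` is the product of the linear factors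
after the `k`-th. The coefficients of `f` commute with every `aⱼ`, hence with the coefficients
of `P`, so `f` commutes with `P`. As `P` is monic it is right cancellable, and
`(g * (X - aₖ)) * P * P = P * (g * (X - aₖ)) * P` rotates the factorization to
`f = P * g * (X - aₖ)`. With `X - aₖ` on the right, `f(aₖ) = 0` even though `A` is not
commutative.
-/

theorem IsRightRegular.commute_of_commute_mul_left {M : Type*} [Semigroup M] {g h : M}
    (hh : IsRightRegular h) (H : Commute (g * h) h) : Commute g h :=
  hh (H.eq.trans (mul_assoc h g h).symm)

namespace Polynomial

theorem commute_of_forall_commute_C_coeff {R : Type*} [Semiring R] {p q : R[X]}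
    (h : ∀ n, Commute (C (p.coeff n)) q) : Commute p q := by
  rw [p.as_sum_range_C_mul_X_pow]
  exact Commute.sum_left _ _ _ fun n _ => (h n).mul_left (commute_X_pow q n)

section Ring

variable {R : Type*} [Ring R]

theorem monic_list_prod_X_sub_C (L : List R) : (L.map fun b => X - C b).prod.Monic :=
  List.prod_induction _ (fun _ _ => Monic.mul) monic_one
    (by simpa using fun b _ => monic_X_sub_C b)

theorem commute_C_prod_X_sub_C {z : R} {L : List R} (h : ∀ b ∈ L, Commute z b) :
    Commute (C z) (L.map fun b => X - C b).prod :=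
  Commute.list_prod_right _ _ <| by
    simpa using fun b hb => (commute_X (C z)).symm.sub_right ((h b hb).map C)

theorem eval_mul_prod_X_sub_C_eq_zero {g : R[X]} {L : List R} {t : R} (ht : t ∈ L)
    (hcomm : ∀ n, ∀ b ∈ L, Commute ((g * (L.map fun b => X - C b).prod).coeff n) b) :
    (g * (L.map fun b => X - C b).prod).eval t = 0 := by
  obtain ⟨l₁, l₂, rfl⟩ := List.mem_iff_append.1 ht
  set P₁ := (l₁.map fun b => X - C b).prod
  set P₂ := (l₂.map fun b => X - C b).prod
  have hsplit : g * ((l₁ ++ t :: l₂).map fun b => X - C b).prod = g * P₁ * (X - C t) * P₂ := by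
    simp [P₁, P₂, mul_assoc]
  rw [hsplit] at hcomm ⊢
  have hP₂ : Commute (g * P₁ * (X - C t) * P₂) P₂ :=
    commute_of_forall_commute_C_coeff fun n =>
      commute_C_prod_X_sub_C fun b hb => hcomm n b (by simp [hb])
  have hrotate : Commute (g * P₁ * (X - C t)) P₂ :=
    (monic_list_prod_X_sub_C l₂).isRegular.right.commute_of_commute_mul_left hP₂
  rw [hrotate.eq, ← mul_assoc, ← mul_assoc]
  exact eval_mul_X_sub_C t

end Ring

end Polynomial

/-- For a splitting `f = c·(X-a₁)⋯(X-aₙ)` with `f` having coefficients in the joint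
centralizer `C` of the `aₖ`'s, the substitutions `X ↦ aₖ` assemble into a ring
homomorphism `C[X] →+* Aⁿ` which kills `f` (hence factors through `C[X]/(f)`),
each component being evaluation at `aₖ`. -/
theorem substitution_ring_hom {A : Type*} [Ring A] {n : ℕ} (a : Fin n → A) (c : A)
    (f : Polynomial (Subring.centralizer (Set.range a)))
    (hsplit : f.map (Subring.subtype _) =
      C c * (List.ofFn (fun k => X - C (a k))).prod) :
    ∃ φ : Polynomial (Subring.centralizer (Set.range a)) →+* (Fin n → A),
      (∀ g k, φ g k = eval₂ (Subring.subtype _) (a k) g) ∧ φ f = 0 := by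
  have hcomm (x : Subring.centralizer (Set.range a)) (k : Fin n) : Commute (x : A) (a k) :=
    (Subring.mem_centralizer_iff.1 x.2 (a k) ⟨k, rfl⟩).symm
  have hprod : List.ofFn (fun k => X - C (a k)) = (List.ofFn a).map fun b => X - C b :=
    (List.map_ofFn (f := a) (g := fun b => X - C b)).symm
  refine ⟨RingHom.pi fun k => eval₂RingHom' (Subring.subtype _) (a k) (hcomm · k),
    fun g k => rfl, funext fun k => ?_⟩
  change eval₂ (Subring.subtype _) (a k) f = 0
  rw [← eval_map, hsplit, hprod]
  refine eval_mul_prod_X_sub_C_eq_zero (List.mem_ofFn.2 ⟨k, rfl⟩) fun i b hb => ?_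
  obtain ⟨j, rfl⟩ := List.mem_ofFn.1 hb
  rw [← hprod, ← hsplit, coeff_map]
  exact hcomm _ j
end

section
/- In the 2×2 upper triangular matrix ring over a nonzero commutative ring K, the Vandermonde-type matrix with block rows (a₁², a₂², a₃²), (a₁, a₂, a₃), (1, 1, 1), where a₁ = [[0,0],[0,1]], a₂ = [[0,-1],[0,0]], a₃ = [[1,1],[0,0]], is not invertible (as a 6×6 matrix over K). -/
open Matrix

theorem Matrix.not_isUnit_of_row_eq {n R : Type*} [Fintype n] [DecidableEq n] [CommRing R]
    [Nontrivial R] {M : Matrix n n R} {i j : n} (hij : i ≠ j) (hrow : M i = M j) :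
    ¬ IsUnit M := by
  rw [isUnit_iff_isUnit_det, det_zero_of_row_eq hij hrow]
  exact not_isUnit_zero

/-- The `6×6` matrix over `K` obtained from the Vandermonde-type block matrix
`(aᵢ²; aᵢ; 1)` for the upper triangular pseudoroots is not invertible. -/
theorem vandermonde_not_invertible {K : Type*} [CommRing K] [Nontrivial K] :
    ¬ IsUnit (!![0, 0, 0, 0, 1, 1;
                 0, 1, 0, 0, 0, 0;
                 0, 0, 0, -1, 1, 1;
                 0, 1, 0, 0, 0, 0;
                 1, 0, 1, 0, 1, 0;
                 0, 1, 0, 1, 0, 1] : Matrix (Fin 6) (Fin 6) K) :=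
  not_isUnit_of_row_eq (i := 1) (j := 3) (by decide) rfl
end
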